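/- Let k be a positive natural number and let P : (Fin k → ℕ) → Prop be any k-ary relation on ℕ. For every infinite set X ⊆ ℕ there exists an infinite set Y ⊆ X such that the truth of P on k-tuples of distinct elements of Y depends only on the order type of the tuple: for any two tuples (a_1,…,a_k) and (b_1,…,b_k) of distinct elements of Y such that a_i < a_j ↔ b_i < b_j for all i,j, we have P(a_1,…,a_k) ↔ P(b_1,…,b_k). -/
import Mathlib

/-- The infinite Ramsey theorem, formulated for colorings of strictly increasing
`k`-tuples of naturals with finitely many colors. -/
theorem ramsey_strictMono_aux (κ : Type) [Finite κ] :
    ∀ (k : ℕ) (c : (Fin k → ℕ) → κ) (X : Set ℕ), X.Infinite →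
    ∃ Y : Set ℕ, Y ⊆ X ∧ Y.Infinite ∧
      ∀ a b : Fin k → ℕ, (∀ i, a i ∈ Y) → (∀ i, b i ∈ Y) →
        StrictMono a → StrictMono b → c a = c b := by
  intro k
  induction k with
  | zero =>
    intro c X hX
    refine ⟨X, le_refl _, hX, fun a b _ _ _ _ => ?_⟩
    have : a = b := funext fun i => i.elim0
    rw [this]
  | succ k ih =>
    intro c X hX
    -- one step of the construction
    have key : ∀ S : Set ℕ, S.Infinite → ∃ T : Set ℕ, T.Infinite ∧ T ⊆ S ∧
        (∀ y ∈ T, sInf S < y) ∧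
        ∀ t u : Fin k → ℕ, (∀ i, t i ∈ T) → (∀ i, u i ∈ T) →
          StrictMono t → StrictMono u →
          c (Fin.cons (sInf S) t) = c (Fin.cons (sInf S) u) := by
      intro S hS
      have hX' : (S \ Set.Iic (sInf S)).Infinite := hS.diff (Set.finite_Iic _)
      obtain ⟨T, hTsub, hTinf, hTconst⟩ :=
        ih (fun t => c (Fin.cons (sInf S) t)) (S \ Set.Iic (sInf S)) hX'
      refine ⟨T, hTinf, fun y hy => (hTsub hy).1, fun y hy => ?_, hTconst⟩
      have := (hTsub hy).2
      simpa using this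
    choose F hF1 hF2 hF3 hF4 using key
    -- the decreasing chain of infinite sets
    let chain : ℕ → {S : Set ℕ // S.Infinite} := fun n =>
      Nat.rec ⟨X, hX⟩ (fun _ p => ⟨F p.1 p.2, hF1 p.1 p.2⟩) n
    have chain_succ : ∀ n, (chain (n + 1)).1 = F (chain n).1 (chain n).2 := fun n => rfl
    have chain_zero : (chain 0).1 = X := rfl
    set x : ℕ → ℕ := fun n => sInf (chain n).1 with hx
    have hxmem : ∀ n, x n ∈ (chain n).1 := fun n =>
      Nat.sInf_mem (chain n).2.nonempty
    have hsub : ∀ n, (chain (n + 1)).1 ⊆ (chain n).1 := by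
      intro n
      rw [chain_succ]
      exact hF2 _ _
    have hnested : ∀ m n, m ≤ n → (chain n).1 ⊆ (chain m).1 := by
      intro m n hmn
      induction hmn with
      | refl => exact le_refl _
      | step _ ihn => exact ihn.trans' (hsub _)
    have hgt : ∀ n, ∀ y ∈ (chain (n + 1)).1, x n < y := by
      intro n y hy
      rw [chain_succ] at hy
      exact hF3 _ _ _ hy
    have hxsm : StrictMono x :=
      strictMono_nat_of_lt_succ fun n => hgt n _ (hxmem (n + 1))
    have hxX : ∀ n, x n ∈ X := fun n => hnested 0 n (Nat.zero_le _) (hxmem n)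
    -- canonical tuple in an infinite set
    have canon : ∀ n, ∃ t : Fin k → ℕ, StrictMono t ∧ ∀ i, t i ∈ (chain (n + 1)).1 := by
      intro n
      have hinf : {m | m ∈ (chain (n + 1)).1}.Infinite := (chain (n + 1)).2
      exact ⟨fun i => Nat.nth (· ∈ (chain (n + 1)).1) i,
        fun i j hij => Nat.nth_strictMono hinf (by exact_mod_cast hij),
        fun i => Nat.nth_mem_of_infinite hinf i⟩
    choose w hwsm hwmem using canon
    set e : ℕ → κ := fun n => c (Fin.cons (x n) (w n)) with he
    -- key constancy property
    have main : ∀ (m : ℕ) (a : Fin (k + 1) → ℕ), StrictMono a →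
        (∀ i, ∃ n, a i = x n) → a 0 = x m → c a = e m := by
      intro m a hasm hmem h0
      have htail_mem : ∀ i : Fin k, Fin.tail a i ∈ (chain (m + 1)).1 := by
        intro i
        obtain ⟨n, hn⟩ := hmem i.succ
        have hlt : x m < x n := by
          rw [← h0, ← hn]
          exact hasm (by simp [Fin.pos_iff_ne_zero, Fin.succ_ne_zero])
        have hmn : m < n := hxsm.lt_iff_lt.mp hlt
        have : x n ∈ (chain n).1 := hxmem n
        have := hnested (m + 1) n hmn this
        simpa [Fin.tail, hn] using this
      have htail_sm : StrictMono (Fin.tail a) := by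
        intro i j hij
        exact hasm (Fin.succ_lt_succ_iff.mpr hij)
      have := hF4 (chain m).1 (chain m).2 (Fin.tail a) (w m)
        (by intro i; rw [← chain_succ]; exact htail_mem i)
        (by intro i; rw [← chain_succ]; exact hwmem m i)
        htail_sm (hwsm m)
      calc c a = c (Fin.cons (a 0) (Fin.tail a)) := by rw [Fin.cons_self_tail]
        _ = c (Fin.cons (x m) (Fin.tail a)) := by rw [h0]
        _ = c (Fin.cons (x m) (w m)) := this
        _ = e m := rfl
    -- pigeonhole
    obtain ⟨k0, hk0⟩ := Finite.exists_infinite_fiber e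
    have hfib : (e ⁻¹' {k0}).Infinite := Set.infinite_coe_iff.mp hk0
    refine ⟨x '' (e ⁻¹' {k0}), ?_, hfib.image (hxsm.injective.injOn), ?_⟩
    · rintro y ⟨n, _, rfl⟩
      exact hxX n
    · intro a b ha hb hasm hbsm
      have haval : c a = k0 := by
        obtain ⟨m, hm, h0⟩ := ha 0
        have := main m a hasm (fun i => by obtain ⟨n, _, hn⟩ := ha i; exact ⟨n, hn.symm⟩)
          h0.symm
        rw [this]; exact hm
      have hbval : c b = k0 := by
        obtain ⟨m, hm, h0⟩ := hb 0
        have := main m b hbsm (fun i => by obtain ⟨n, _, hn⟩ := hb i; exact ⟨n, hn.symm⟩)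
          h0.symm
        rw [this]; exact hm
      rw [haval, hbval]

theorem ramsey_order_type (k : ℕ) (hk : 0 < k) (P : (Fin k → ℕ) → Prop)
    (X : Set ℕ) (hX : X.Infinite) :
    ∃ Y : Set ℕ, Y ⊆ X ∧ Y.Infinite ∧
      ∀ a b : Fin k → ℕ, (∀ i, a i ∈ Y) → (∀ i, b i ∈ Y) →
        Function.Injective a → Function.Injective b →
        (∀ i j, a i < a j ↔ b i < b j) → (P a ↔ P b) := by
  classical
  set c : (Fin k → ℕ) → (Equiv.Perm (Fin k) → Bool) :=
    fun t σ => decide (P (t ∘ σ)) with hc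
  obtain ⟨Y, hYX, hYinf, hYconst⟩ := ramsey_strictMono_aux _ k c X hX
  refine ⟨Y, hYX, hYinf, ?_⟩
  intro a b ha hb hainj hbinj hab
  set σ := Tuple.sort a with hσ
  have hasm : StrictMono (a ∘ σ) :=
    (Tuple.monotone_sort a).strictMono_of_injective
      (hainj.comp σ.injective)
  have hbsm : StrictMono (b ∘ σ) := by
    intro i j hij
    exact (hab (σ i) (σ j)).mp (hasm hij)
  have hcc : c (a ∘ σ) = c (b ∘ σ) :=
    hYconst (a ∘ σ) (b ∘ σ) (fun i => ha (σ i)) (fun i => hb (σ i)) hasm hbsm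
  have := congrFun hcc σ⁻¹
  have haσ : (a ∘ σ) ∘ (σ⁻¹ : Equiv.Perm (Fin k)) = a := by
    funext i; simp
  have hbσ : (b ∘ σ) ∘ (σ⁻¹ : Equiv.Perm (Fin k)) = b := by
    funext i; simp
  rw [hc] at this
  simp only [haσ, hbσ] at this
  exact decide_eq_decide.mp this
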